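/- Let P be a finite set of points in ℝ² colored with 2k colors, all used. Then the MinSum color-spanning matching value equals the minimum, over all perfect matchings μ of the 2k colors, of the sum over matched pairs {i,j} ∈ μ of the bichromatic closest-pair distance between colors i and j. -/

import Mathlib

/-! Every color-spanning matching induces a perfect matching of its edge colors, and each edge is
at least as long as the closest pair of its two colors; so every weight dominates one of the
closest-pair sums. Conversely, a perfect matching of the colors is realised by choosing a closest
pair for each matched pair of colors: the pairs use disjoint colors, so the chosen points form a
color-spanning matching whose weight is exactly that sum. -/

open scoped Classical

noncomputable section

abbrev Pt := EuclideanSpace ℝ (Fin 2)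

/-- A color-spanning matching of a `2*k`-colored point set `P`: `k` edges whose
`2*k` endpoints lie in `P` and have pairwise distinct colors (hence the
endpoints are pairwise distinct and all `2*k` colors are used). -/
structure CSM (k : ℕ) (P : Finset Pt) (color : Pt → Fin (2*k)) where
  e : Fin k → Pt × Pt
  mem1 : ∀ i, (e i).1 ∈ P
  mem2 : ∀ i, (e i).2 ∈ P
  colorInj : Function.Injective
    (fun x : Fin k × Bool => color (if x.2 then (e x.1).1 else (e x.1).2))

def CSM.weight {k : ℕ} {P : Finset Pt} {color : Pt → Fin (2*k)}
    (M : CSM k P color) : ℝ :=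
  ∑ i, dist (M.e i).1 (M.e i).2

def CSM.minEdge {k : ℕ} (hk : 0 < k) {P : Finset Pt} {color : Pt → Fin (2*k)}
    (M : CSM k P color) : ℝ :=
  Finset.univ.inf' ⟨⟨0, hk⟩, Finset.mem_univ _⟩ fun i => dist (M.e i).1 (M.e i).2

def CSM.maxEdge {k : ℕ} (hk : 0 < k) {P : Finset Pt} {color : Pt → Fin (2*k)}
    (M : CSM k P color) : ℝ :=
  Finset.univ.sup' ⟨⟨0, hk⟩, Finset.mem_univ _⟩ fun i => dist (M.e i).1 (M.e i).2

/-- The bichromatic farthest-pair distance between colors `c` and `d`. -/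
def farDist {k : ℕ} (P : Finset Pt) (color : Pt → Fin (2*k)) (c d : Fin (2*k)) : ℝ :=
  sSup {r : ℝ | ∃ p ∈ P, ∃ q ∈ P, color p = c ∧ color q = d ∧ dist p q = r}

/-- The bichromatic closest-pair distance between colors `c` and `d`. -/
def closeDist {k : ℕ} (P : Finset Pt) (color : Pt → Fin (2*k)) (c d : Fin (2*k)) : ℝ :=
  sInf {r : ℝ | ∃ p ∈ P, ∃ q ∈ P, color p = c ∧ color q = d ∧ dist p q = r}

/-- A perfect matching of the `2*k` colors: `k` unordered pairs (encoded as
ordered pairs) whose endpoints enumerate all `2*k` colors without repetition. -/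
def IsColorPM (k : ℕ) (μ : Fin k → Fin (2*k) × Fin (2*k)) : Prop :=
  Function.Injective (fun x : Fin k × Bool =>
    if x.2 then (μ x.1).1 else (μ x.1).2)

section

variable {k : ℕ} {P : Finset Pt} {color : Pt → Fin (2*k)}

lemma exists_dist_eq_closeDist {c d : Fin (2*k)} (hc : ∃ p ∈ P, color p = c)
    (hd : ∃ q ∈ P, color q = d) :
    ∃ p ∈ P, ∃ q ∈ P, color p = c ∧ color q = d ∧ dist p q = closeDist P color c d := by
  obtain ⟨p, hp, hpc⟩ := hc
  obtain ⟨q, hq, hqd⟩ := hd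
  have hfin : {r : ℝ | ∃ p ∈ P, ∃ q ∈ P, color p = c ∧ color q = d ∧
      dist p q = r}.Finite := by
    refine ((P ×ˢ P).finite_toSet.image fun pq : Pt × Pt => dist pq.1 pq.2).subset ?_
    rintro r ⟨a, ha, b, hb, -, -, hr⟩
    exact ⟨(a, b), Finset.mem_product.2 ⟨ha, hb⟩, hr⟩
  refine Set.Nonempty.csInf_mem ?_ hfin
  exact ⟨dist p q, p, hp, q, hq, hpc, hqd, rfl⟩

lemma closeDist_le_dist {p q : Pt} (hp : p ∈ P) (hq : q ∈ P) :
    closeDist P color (color p) (color q) ≤ dist p q :=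
  csInf_le ⟨0, by rintro _ ⟨a, -, b, -, -, -, rfl⟩; exact dist_nonneg⟩
    ⟨p, hp, q, hq, rfl, rfl, rfl⟩

lemma isColorPM_consecutive :
    IsColorPM k fun i => (⟨2 * i, by omega⟩, ⟨2 * i + 1, by omega⟩) := by
  rintro ⟨i, _ | _⟩ ⟨j, _ | _⟩ h <;>
    simp only [Fin.ext_iff, Prod.ext_iff, Bool.false_eq_true, if_true, if_false,
      Bool.true_eq_false, and_true, and_false] at h ⊢ <;> omega

namespace CSM

lemma weight_nonneg (M : CSM k P color) : 0 ≤ M.weight :=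
  Finset.sum_nonneg fun _ _ => dist_nonneg

lemma isColorPM (M : CSM k P color) :
    IsColorPM k fun i => (color (M.e i).1, color (M.e i).2) := by
  simpa only [IsColorPM, apply_ite color] using M.colorInj

lemma sum_closeDist_le_weight (M : CSM k P color) :
    ∑ i, closeDist P color (color (M.e i).1) (color (M.e i).2) ≤ M.weight :=
  Finset.sum_le_sum fun i _ => closeDist_le_dist (M.mem1 i) (M.mem2 i)

lemma exists_weight_eq_sum_closeDist (hsurj : ∀ c : Fin (2*k), ∃ p ∈ P, color p = c)
    {μ : Fin k → Fin (2*k) × Fin (2*k)} (hμ : IsColorPM k μ) :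
    ∃ M : CSM k P color, M.weight = ∑ i, closeDist P color (μ i).1 (μ i).2 := by
  choose p hp q hq hpc hqd hdist using
    fun i => exists_dist_eq_closeDist (hsurj (μ i).1) (hsurj (μ i).2)
  have hcolor : (fun x : Fin k × Bool => color (if x.2 then p x.1 else q x.1)) =
      fun x => if x.2 then (μ x.1).1 else (μ x.1).2 := by
    funext x
    cases x.2 <;> simp only [Bool.false_eq_true, if_true, if_false, hpc, hqd]
  exact ⟨⟨fun i => (p i, q i), hp, hq, by rw [hcolor]; exact hμ⟩,
    Finset.sum_congr rfl fun i _ => hdist i⟩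

end CSM

end

/-- The MinSum color-spanning matching value equals the minimum, over perfect
matchings `μ` of the `2*k` colors, of the sum over matched color pairs of the
bichromatic closest-pair distance. -/
theorem minsum_eq_min_over_colorPM
    (k : ℕ) (P : Finset Pt) (color : Pt → Fin (2*k))
    (hsurj : ∀ c : Fin (2*k), ∃ p ∈ P, color p = c) :
    sInf {r : ℝ | ∃ M : CSM k P color, r = M.weight} =
    sInf {r : ℝ | ∃ μ : Fin k → Fin (2*k) × Fin (2*k), IsColorPM k μ ∧
        r = ∑ i, closeDist P color (μ i).1 (μ i).2} := by
  set A := {r : ℝ | ∃ M : CSM k P color, r = M.weight}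
  set B := {r : ℝ | ∃ μ : Fin k → Fin (2*k) × Fin (2*k), IsColorPM k μ ∧
      r = ∑ i, closeDist P color (μ i).1 (μ i).2}
  have hBA : B ⊆ A := by
    rintro _ ⟨μ, hμ, rfl⟩
    obtain ⟨M, hM⟩ := CSM.exists_weight_eq_sum_closeDist hsurj hμ
    exact ⟨M, hM.symm⟩
  have hB : B.Nonempty := ⟨_, _, isColorPM_consecutive, rfl⟩
  have hA_bdd : BddBelow A := ⟨0, by rintro _ ⟨M, rfl⟩; exact M.weight_nonneg⟩
  refine le_antisymm (csInf_le_csInf hA_bdd hB hBA) (le_csInf (hB.mono hBA) ?_)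
  rintro _ ⟨M, rfl⟩
  exact (csInf_le (hA_bdd.mono hBA) ⟨_, M.isColorPM, rfl⟩).trans M.sum_closeDist_le_weight

end
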